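/- The hyperbolic distance on the upper half plane satisfies sinh(d(z,w)/2) = |z − w| / (2·√(Im z · Im w)). Consequently, fixing z₀ = −1/2 + i√3/2 and Δ = √3/2, the distance from z₀ to the point −1/2 + iΔ/r² equals −ln(r²) = 2ln(1/r), and for r sufficiently close to 1, B_ℍ(z₀, −ln r²) ⊂ {z ∈ D : Im z ≤ Δ/r²} ⊂ B_ℍ(z₀, ln 2 + ln(r² − √(r⁴ − 3/4))) within the fundamental domain D. -/

import Mathlib

set_option maxHeartbeats 2000000

open UpperHalfPlane

/-- the corner point `z₀ = −1/2 + i√3/2` of the standard fundamental domain -/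
noncomputable def z₀ : ℍ :=
  ⟨⟨-1/2, Real.sqrt 3 / 2⟩, by
    show (0 : ℝ) < Real.sqrt 3 / 2
    positivity⟩

/-- the standard fundamental domain for `SL₂(ℤ)` -/
noncomputable def Dset : Set ℍ :=
  {z : ℍ | |z.re| ≤ 1 / 2 ∧ 1 ≤ ‖(z : ℂ)‖}

/-- the `SL₂(ℤ)`-orbit of `z₀` in the upper half-plane -/
noncomputable def z₀orbit : Set ℍ :=
  {w : ℍ | ∃ γ : Matrix.SpecialLinearGroup (Fin 2) ℤ, w = γ • z₀}

section Aux

open Real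


private lemma aux_e1 (t c : ℝ) (ht : t^2 = 3) (ht0 : 0 < t) (hc0 : 0 ≤ c) :
    0 ≤ (t+c)^2*(3/4) - 9/4 := by nlinarith [mul_nonneg hc0 ht0.le, sq_nonneg c]

private lemma aux_div (p E : ℝ) (hp : 0 < p) (h : 0 ≤ p*E) : 0 ≤ E := by nlinarith

private lemma aux_div' (p E : ℝ) (hp : 0 < p) (h : p*E ≤ 0) : E ≤ 0 := by nlinarith

private lemma aux_sqcmp (a b : ℝ) (ha : 0 ≤ a) (hb : 0 ≤ b) (h : a^2 ≤ b^2) : a ≤ b := by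
  nlinarith

private lemma aux_key (k u x : ℝ) (hk : 0 ≤ k) (hu0 : 0 ≤ u) (hu2 : u^2 = 1 - x^2)
    (hx : -(1/2) ≤ x) (hP : 0 ≤ k^2*(1-x^2) - (x+2)^2) : x + 2 ≤ k*u := by
  nlinarith [mul_nonneg hk hu0]

lemma core_ineq (s q x y t Y c : ℝ) (ht : t^2 = 3) (ht0 : 0 < t)
    (hq : q^2 = s^2 - 3/4) (hq0 : 0 ≤ q) (hs1 : s < 1) (hs : (9/10:ℝ) ≤ s)
    (hY : 2*s*Y = t) (hc : 3*c = t*(4*s-2*q-3))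
    (hx : -(1/2) ≤ x) (hx0 : x ≤ 0) (hy : 0 < y)
    (hcirc : 1 ≤ x^2 + y^2) (hyY : y ≤ Y) :
    (x+1/2)^2 + (y-t/2)^2 ≤ c*y := by
  have hs0 : (0:ℝ) < s := by linarith
  have hY0 : 0 < Y := by nlinarith
  have hqs : 2*q < s := by nlinarith [sq_nonneg (s - 2*q)]
  have hx2 : x^2 ≤ 1/4 := by
    have hT := mul_nonneg (by linarith : (0:ℝ) ≤ x + 1/2) (by linarith : (0:ℝ) ≤ -x)
    nlinarith [hT]
  obtain ⟨u, hu0, hu2⟩ : ∃ u : ℝ, 0 ≤ u ∧ u^2 = 1 - x^2 :=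
    ⟨Real.sqrt (1 - x^2), Real.sqrt_nonneg _, Real.sq_sqrt (by linarith)⟩
  have huy : u ≤ y := aux_sqcmp u y hu0 hy.le (by linarith [hu2, hcirc])
  have hsY : s*Y = t/2 := by linarith
  have hY2 : s^2*Y^2 = 3/4 := by
    have h := congrArg (·^2) hsY
    linear_combination h + (1/4)*ht
  have hsxneg : s*x ≤ 0 := by linarith [mul_nonneg hs0.le (neg_nonneg.2 hx0)]
  have hsx : q ≤ -(s*x) := by
    have hy2Y : y^2 ≤ Y^2 := by
      have hT := mul_nonneg (by linarith : (0:ℝ) ≤ Y - y) (by linarith : (0:ℝ) ≤ Y + y)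
      linarith [hT]
    have h1 : q^2 ≤ (s*x)^2 := by
      have hA := mul_le_mul_of_nonneg_left hy2Y (sq_nonneg s)
      have hB := mul_le_mul_of_nonneg_left hcirc (sq_nonneg s)
      nlinarith [hA, hB]
    exact aux_sqcmp q (-(s*x)) hq0 (by linarith) (by nlinarith [h1])
  have hc0 : 0 ≤ c := by
    have h1 : 2*q ≤ 4*s - 3 := by nlinarith [sq_nonneg (s-1)]
    nlinarith
  -- endpoint at y = Y
  have hgY : (x+1/2)^2 + (Y - t/2)^2 ≤ c*Y := by
    have h2 : 0 ≤ s*(x + 1/2) := mul_nonneg hs0.le (by linarith)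
    have h3 : s*(x+1/2) ≤ s/2 - q := by nlinarith [hsx]
    have htY : s^2*t*Y = 3*s/2 := by linear_combination t*s*hsY + (s/2)*ht
    have hcY : s^2*c*Y = s*(4*s-2*q-3)/2 := by
      linear_combination (s*c)*hsY + (s*t/6)*hc + (s*(4*s-2*q-3)/6)*ht
    have key : (s/2-q)^2 + s^2*(Y-t/2)^2 = s^2*(c*Y) := by
      linear_combination hq + hY2 - htY + (s^2/4)*ht - hcY
    have h4 : s^2*(x+1/2)^2 ≤ (s/2-q)^2 := by
      have hT := mul_nonneg (by linarith [h2, h3] : (0:ℝ) ≤ (s/2-q) - s*(x+1/2))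
        (by linarith [h2, h3] : (0:ℝ) ≤ (s/2-q) + s*(x+1/2))
      nlinarith [hT]
    have h5 : s^2*((x+1/2)^2 + (Y-t/2)^2 - c*Y) ≤ 0 := by linarith [h4, key.le]
    have := aux_div' (s^2) ((x+1/2)^2 + (Y-t/2)^2 - c*Y) (by positivity) h5
    linarith
  -- endpoint on the circle y = u
  have hgu : (x+1/2)^2 + (u - t/2)^2 ≤ c*u := by
    have hkt : (t+c)*t = 4*s - 2*q := by
      linear_combination (t/3)*hc + ((4*s-2*q)/3)*ht
    have e2' : (t+c)^2*(3/4) = (2*s-q)^2 := by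
      linear_combination ((t+c)*t + (4*s-2*q))/4 * hkt - ((t+c)^2/4)*ht
    have e2s : (t+c)^2*(s^2-q^2) - (2*s-q)^2 = 0 := by
      linear_combination e2' - (t+c)^2*hq
    have e1 : 0 ≤ (t+c)^2*(3/4) - 9/4 := aux_e1 t c ht ht0 hc0
    have iden : s*(s-2*q)/2 * ((t+c)^2*(1-x^2)-(x+2)^2)
        = s*(-q-s*x)*((t+c)^2*(3/4)-9/4)
        + (x+1/2)*((t+c)^2*(s^2-q^2)-(2*s-q)^2)
        + ((t+c)^2+1)*(x+1/2)*(-q-s*x)*(s-2*q)/2 := by ring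
    have hP : 0 ≤ (t+c)^2 * (1 - x^2) - (x+2)^2 := by
      have t1 : 0 ≤ s*(-q-s*x)*((t+c)^2*(3/4)-9/4) :=
        mul_nonneg (mul_nonneg hs0.le (by linarith)) e1
      have t2 : (x+1/2)*((t+c)^2*(s^2-q^2)-(2*s-q)^2) = 0 := by rw [e2s, mul_zero]
      have t3 : 0 ≤ ((t+c)^2+1)*(x+1/2)*(-q-s*x)*(s-2*q)/2 := by
        have := mul_nonneg (mul_nonneg (mul_nonneg (by positivity : (0:ℝ) ≤ (t+c)^2+1)
          (by linarith : (0:ℝ) ≤ x+1/2)) (by linarith : (0:ℝ) ≤ -q-s*x))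
          (by linarith : (0:ℝ) ≤ s-2*q)
        linarith
      have hRHS : 0 ≤ s*(s-2*q)/2 * ((t+c)^2*(1-x^2)-(x+2)^2) := by
        rw [iden, t2]; linarith
      exact aux_div (s*(s-2*q)/2) _
        (by have h := mul_pos hs0 (by linarith : (0:ℝ) < s - 2*q); linarith) hRHS
    have key : x + 2 ≤ (t+c)*u :=
      aux_key (t+c) u x (by linarith) hu0 hu2 hx hP
    linarith [key, hu2, ht]
  -- monic quadratic in y: bounded by value at an endpoint
  rcases le_or_gt (y + u) (t + c) with hcase | hcase
  · have hT : (0:ℝ) ≤ (y - u) * ((t+c) - (y+u)) :=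
      mul_nonneg (by linarith) (by linarith)
    linarith [hT, hgu]
  · have hT : (0:ℝ) ≤ (Y - y) * ((y+Y) - (t+c)) :=
      mul_nonneg (by linarith) (by linarith)
    linarith [hT, hgY]


private lemma int_quad (c d : ℤ) (h : ¬(c = 0 ∧ d = 0)) : 1 ≤ c^2 - c*d + d^2 := by
  have h3 : 3 ≤ 4*(c^2 - c*d + d^2) ∨ 4 ≤ 4*(c^2 - c*d + d^2) := by
    rcases eq_or_ne c 0 with rfl | hc
    · have hd : d ≠ 0 := by tauto
      have h1 : 1 ≤ |d| := Int.one_le_abs hd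
      right; nlinarith [sq_abs d, abs_nonneg d]
    · have h1 : 1 ≤ |c| := Int.one_le_abs hc
      have h2 : 1 ≤ c^2 := by nlinarith [sq_abs c, abs_nonneg c]
      left; nlinarith [sq_nonneg (2*d - c)]
  rcases h3 with h3 | h3 <;> omega


private lemma orbit_im_le (γ : Matrix.SpecialLinearGroup (Fin 2) ℤ) :
    (γ • z₀).im ≤ Real.sqrt 3 / 2 := by
  rw [ModularGroup.im_smul_eq_div_normSq γ z₀, ModularGroup.denom_apply γ z₀]
  have hcd : ¬(γ 1 0 = 0 ∧ γ 1 1 = 0) := by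
    rintro ⟨hc0, hd0⟩
    have hdet : (↑γ : Matrix (Fin 2) (Fin 2) ℤ).det = 1 := γ.prop
    rw [Matrix.det_fin_two] at hdet
    simp only [hc0, hd0] at hdet
    simp at hdet
  have hint := int_quad (γ 1 0) (γ 1 1) hcd
  have ht : Real.sqrt 3 ^ 2 = 3 := Real.sq_sqrt (by norm_num)
  have hnorm : Complex.normSq ((γ 1 0 : ℂ) * (z₀:ℂ) + (γ 1 1 : ℂ))
      = (((γ 1 0)^2 - (γ 1 0)*(γ 1 1) + (γ 1 1)^2 : ℤ) : ℝ) := by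
    simp only [Complex.normSq_apply, Complex.add_re, Complex.add_im, Complex.mul_re,
      Complex.mul_im, Complex.intCast_re, Complex.intCast_im,
      show (z₀:ℂ).re = -1/2 from rfl, show (z₀:ℂ).im = Real.sqrt 3 / 2 from rfl]
    push_cast
    nlinarith [ht]
  rw [hnorm]
  have h1 : (1:ℝ) ≤ (((γ 1 0)^2 - (γ 1 0)*(γ 1 1) + (γ 1 1)^2 : ℤ) : ℝ) := by
    exact_mod_cast hint
  have him : z₀.im = Real.sqrt 3 / 2 := rfl
  rw [him]
  exact div_le_self (by positivity) h1

end Aux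

/-- The hyperbolic `sinh(d/2)` formula, the distance from `z₀` to `−1/2 + iΔ/r²`, and the
two-sided approximation of the region `{z ∈ D : Im z ≤ Δ/r²}` by hyperbolic balls around
the orbit of `z₀`, for `r` close to `1` (`Δ = √3/2`). -/
theorem hyperbolic_ball_estimates :
    letI Δ : ℝ := Real.sqrt 3 / 2
    (∀ z w : ℍ, Real.sinh (dist z w / 2) =
        ‖(z : ℂ) - (w : ℂ)‖ / (2 * Real.sqrt (z.im * w.im))) ∧
    (∀ r : ℝ, 0 < r → r ≤ 1 → ∀ w : ℍ, w.re = -1/2 → w.im = Δ / r ^ 2 →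
        dist z₀ w = -Real.log (r ^ 2)) ∧
    (∃ r₀ : ℝ, r₀ < 1 ∧ ∀ r : ℝ, r₀ < r → r < 1 →
      (∀ z ∈ Dset, Metric.infDist z z₀orbit < -Real.log (r ^ 2) → z.im ≤ Δ / r ^ 2) ∧
      (∀ z ∈ Dset, z.im ≤ Δ / r ^ 2 →
        Metric.infDist z z₀orbit ≤
          Real.log 2 + Real.log (r ^ 2 - Real.sqrt (r ^ 4 - 3/4)))) := by
  refine ⟨?_, ?_, ?_⟩
  · intro z w
    simpa [Complex.dist_eq] using UpperHalfPlane.sinh_half_dist z w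
  · intro r hr hr1 w hwre hwim
    have hΔ : (0:ℝ) < Real.sqrt 3 / 2 := by positivity
    have hr2 : (0:ℝ) < r^2 := by positivity
    rw [UpperHalfPlane.dist_of_re_eq (show z₀.re = w.re by rw [hwre]; rfl)]
    have him : z₀.im = Real.sqrt 3 / 2 := rfl
    rw [him, hwim, Real.dist_eq, Real.log_div hΔ.ne' hr2.ne']
    have hlog : Real.log (r^2) ≤ 0 :=
      Real.log_nonpos (by positivity) (by nlinarith)
    rw [show Real.log (Real.sqrt 3/2) - (Real.log (Real.sqrt 3/2) - Real.log (r^2))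
        = Real.log (r^2) by ring, abs_of_nonpos hlog]
  · refine ⟨0.99, by norm_num, fun r hr0 hr1 => ⟨?_, ?_⟩⟩
    · -- inner ball inclusion
      intro z _ hlt
      have hr : (0:ℝ) < r := by norm_num at hr0 ⊢; linarith
      have hr2 : (0:ℝ) < r^2 := by positivity
      have hne : z₀orbit.Nonempty := ⟨z₀, 1, (one_smul _ z₀).symm⟩
      obtain ⟨w, hwmem, hd⟩ := (Metric.infDist_lt_iff hne).mp hlt
      obtain ⟨γ, rfl⟩ := hwmem
      have him : (γ • z₀).im ≤ Real.sqrt 3 / 2 := orbit_im_le γ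
      have h1 : |Real.log z.im - Real.log ((γ • z₀).im)| ≤ dist z (γ • z₀) := by
        simpa [Real.dist_eq] using UpperHalfPlane.dist_log_im_le z (γ • z₀)
      have h2 : Real.log z.im < Real.log ((γ • z₀).im) - Real.log (r^2) := by
        have := le_abs_self (Real.log z.im - Real.log ((γ • z₀).im))
        linarith
      have h3 : Real.log ((γ • z₀).im) ≤ Real.log (Real.sqrt 3 / 2) :=
        Real.log_le_log (γ • z₀).im_pos him
      have h4 : Real.log z.im < Real.log (Real.sqrt 3 / 2 / r^2) := by
        rw [Real.log_div (by positivity) hr2.ne']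
        linarith
      have h5 := Real.exp_lt_exp.mpr h4
      rw [Real.exp_log z.im_pos, Real.exp_log (by positivity)] at h5
      exact h5.le
    · intro z hz him
      obtain ⟨hre, habs⟩ := hz
      obtain ⟨hre1, hre2⟩ := abs_le.mp hre
      have hr : (0.99:ℝ) < r := by exact_mod_cast hr0
      have hrpos : (0:ℝ) < r := by linarith
      have ht : Real.sqrt 3 ^ 2 = 3 := Real.sq_sqrt (by norm_num)
      have ht0 : (0:ℝ) < Real.sqrt 3 := Real.sqrt_pos.mpr (by norm_num)
      have hs : (9/10:ℝ) ≤ r^2 := by nlinarith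
      have hs1 : r^2 < 1 := by nlinarith
      have h34 : (3/4:ℝ) ≤ r^4 := by nlinarith [sq_nonneg (r^2 - 9/10)]
      set q := Real.sqrt (r^4 - 3/4) with hqdef
      have hq : q^2 = r^4 - 3/4 := Real.sq_sqrt (by linarith)
      have hq0 : 0 ≤ q := Real.sqrt_nonneg _
      have hq' : q^2 = (r^2)^2 - 3/4 := by rw [hq]; ring
      have hq2 : q ≤ r^2 - 1/2 :=
        aux_sqcmp q (r^2-1/2) hq0 (by nlinarith) (by nlinarith [hq'])
      have hsq : (0:ℝ) < r^2 - q := by nlinarith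
      set R := Real.log 2 + Real.log (r^2 - q) with hRdef
      have hexp : Real.exp R = 2*(r^2 - q) := by
        rw [hRdef, Real.exp_add, Real.exp_log two_pos, Real.exp_log hsq]
      have hcosh : Real.cosh R = (4*r^2 - 2*q)/3 := by
        rw [Real.cosh_eq, Real.exp_neg, hexp]
        rw [div_eq_div_iff (by norm_num) (by norm_num)]
        field_simp
        nlinarith [hq']
      have hR0 : 0 ≤ R := by
        rw [hRdef, ← Real.log_mul two_ne_zero hsq.ne']
        exact Real.log_nonneg (by nlinarith)
      have hcirc : 1 ≤ z.re^2 + z.im^2 := by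
        have h1 : (1:ℝ) ≤ ‖(z:ℂ)‖^2 := by nlinarith [habs, norm_nonneg (z:ℂ)]
        rw [Complex.sq_norm, Complex.normSq_apply, UpperHalfPlane.coe_re, UpperHalfPlane.coe_im] at h1
        nlinarith [h1]
      have him' : z.im ≤ Real.sqrt 3/(2*r^2) := by
        rw [← div_div]; exact him
      have hY : 2*r^2*(Real.sqrt 3/(2*r^2)) = Real.sqrt 3 := by field_simp
      have hc : 3*(Real.sqrt 3*(4*r^2-2*q-3)/3) = Real.sqrt 3*(4*r^2-2*q-3) := by ring
      have hcdiv : (Real.sqrt 3*(4*r^2-2*q-3)/3)/Real.sqrt 3 = (4*r^2-2*q-3)/3 := by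
        field_simp
      rcases le_total z.re 0 with hx0 | hx0
      · have hcore := core_ineq (r^2) q z.re z.im (Real.sqrt 3) (Real.sqrt 3/(2*r^2))
          (Real.sqrt 3*(4*r^2-2*q-3)/3) ht ht0 hq' hq0 hs1 hs hY hc hre1 hx0 z.im_pos hcirc him'
        have hd2 : dist (z:ℂ) (z₀:ℂ)^2 = (z.re + 1/2)^2 + (z.im - Real.sqrt 3/2)^2 := by
          rw [Complex.dist_eq, Complex.sq_norm, Complex.normSq_apply]
          simp only [Complex.sub_re, Complex.sub_im, UpperHalfPlane.coe_re, UpperHalfPlane.coe_im,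
            show z₀.re = -1/2 from rfl, show z₀.im = Real.sqrt 3/2 from rfl]
          ring
        have hcosh_le : Real.cosh (dist z z₀) ≤ Real.cosh R := by
          rw [UpperHalfPlane.cosh_dist, hd2, hcosh,
            show 2 * z.im * z₀.im = Real.sqrt 3 * z.im by
              rw [show z₀.im = Real.sqrt 3/2 from rfl]; ring]
          have h6 : ((z.re + 1/2)^2 + (z.im - Real.sqrt 3/2)^2) / (Real.sqrt 3 * z.im)
              ≤ (Real.sqrt 3*(4*r^2-2*q-3)/3) / Real.sqrt 3 := by
            rw [div_le_div_iff₀ (by positivity) ht0]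
            calc ((z.re + 1/2)^2 + (z.im - Real.sqrt 3/2)^2) * Real.sqrt 3
                ≤ (Real.sqrt 3*(4*r^2-2*q-3)/3) * z.im * Real.sqrt 3 := by
                  nlinarith [mul_le_mul_of_nonneg_right hcore (Real.sqrt_nonneg 3)]
              _ = (Real.sqrt 3*(4*r^2-2*q-3)/3) * (Real.sqrt 3 * z.im) := by ring
          rw [hcdiv] at h6
          linarith
        have hdist : dist z z₀ ≤ R := by
          have h8 := Real.cosh_le_cosh.mp hcosh_le
          rwa [abs_of_nonneg dist_nonneg, abs_of_nonneg hR0] at h8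
        calc Metric.infDist z z₀orbit ≤ dist z z₀ :=
              Metric.infDist_le_dist_of_mem ⟨1, (one_smul _ _).symm⟩
          _ ≤ R := hdist
      · have hwre : (ModularGroup.T • z₀).re = 1/2 := by
          rw [UpperHalfPlane.modular_T_smul, UpperHalfPlane.vadd_re]
          norm_num [show z₀.re = -1/2 from rfl]
        have hwim : (ModularGroup.T • z₀).im = Real.sqrt 3/2 := by
          rw [UpperHalfPlane.modular_T_smul, UpperHalfPlane.vadd_im]
          rfl
        have hcore := core_ineq (r^2) q (-z.re) z.im (Real.sqrt 3) (Real.sqrt 3/(2*r^2))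
          (Real.sqrt 3*(4*r^2-2*q-3)/3) ht ht0 hq' hq0 hs1 hs hY hc (by linarith) (by linarith)
          z.im_pos (by rw [neg_pow]; simpa using hcirc) him'
        have hd2 : dist (z:ℂ) ((ModularGroup.T • z₀ : ℍ):ℂ)^2
            = (-z.re + 1/2)^2 + (z.im - Real.sqrt 3/2)^2 := by
          rw [Complex.dist_eq, Complex.sq_norm, Complex.normSq_apply]
          simp only [Complex.sub_re, Complex.sub_im, UpperHalfPlane.coe_re, UpperHalfPlane.coe_im]
          rw [hwre, hwim]
          ring
        have hcosh_le : Real.cosh (dist z (ModularGroup.T • z₀)) ≤ Real.cosh R := by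
          rw [UpperHalfPlane.cosh_dist, hd2, hcosh,
            show 2 * z.im * (ModularGroup.T • z₀).im = Real.sqrt 3 * z.im by rw [hwim]; ring]
          have h6 : ((-z.re + 1/2)^2 + (z.im - Real.sqrt 3/2)^2) / (Real.sqrt 3 * z.im)
              ≤ (Real.sqrt 3*(4*r^2-2*q-3)/3) / Real.sqrt 3 := by
            rw [div_le_div_iff₀ (by positivity) ht0]
            calc ((-z.re + 1/2)^2 + (z.im - Real.sqrt 3/2)^2) * Real.sqrt 3
                ≤ (Real.sqrt 3*(4*r^2-2*q-3)/3) * z.im * Real.sqrt 3 := by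
                  nlinarith [mul_le_mul_of_nonneg_right hcore (Real.sqrt_nonneg 3)]
              _ = (Real.sqrt 3*(4*r^2-2*q-3)/3) * (Real.sqrt 3 * z.im) := by ring
          rw [hcdiv] at h6
          linarith
        have hdist : dist z (ModularGroup.T • z₀) ≤ R := by
          have h8 := Real.cosh_le_cosh.mp hcosh_le
          rwa [abs_of_nonneg dist_nonneg, abs_of_nonneg hR0] at h8
        calc Metric.infDist z z₀orbit ≤ dist z (ModularGroup.T • z₀) :=
              Metric.infDist_le_dist_of_mem ⟨ModularGroup.T, rfl⟩
          _ ≤ R := hdist
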